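/- arXiv:2403.19525 — 9 statements merged into one kernel-verified Lean document; each statement's English description precedes it below -/
import Mathlib

section
/- If a propositional formula A (in a language with variables and parameters) has two substitutions θ₁, θ₂ that fix all parameters, satisfy A ⊢ θᵢ(a) ↔ a for every atom a, and ⊢ θᵢ(A) ↔ Bᵢ for variable-free formulas B₁, B₂, then ⊢ B₁ ↔ B₂. (Uniqueness of projections, valid in both classical and intuitionistic logic.) -/
inductive Form (var par : Type) : Type where
  | bot : Form var par
  | v : var → Form var par
  | p : par → Form var par
  | and : Form var par → Form var par → Form var par
  | or : Form var par → Form var par → Form var par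
  | imp : Form var par → Form var par → Form var par

namespace Form
variable {var par : Type}

def neg (A : Form var par) : Form var par := A.imp .bot
def top : Form var par := Form.neg .bot
def fiff (A B : Form var par) : Form var par := (A.imp B).and (B.imp A)

/-- `varFree A`: `A` contains no variables (it lies in the parameter-only sublanguage). -/
def varFree : Form var par → Prop
  | .bot => True
  | .v _ => False
  | .p _ => True
  | .and A B => varFree A ∧ varFree B
  | .or A B => varFree A ∧ varFree B
  | .imp A B => varFree A ∧ varFree B

/-- Substitutions act on variables, fix parameters, and commute with connectives. -/
def subst (θ : var → Form var par) : Form var par → Form var par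
  | .bot => .bot
  | .v x => θ x
  | .p q => .p q
  | .and A B => (subst θ A).and (subst θ B)
  | .or A B => (subst θ A).or (subst θ B)
  | .imp A B => (subst θ A).imp (subst θ B)

end Form

/-- Hilbert-style provability: `cl = false` is intuitionistic logic (IPC),
`cl = true` is classical logic (CPC). -/
inductive Prv {var par : Type} (cl : Bool) : Form var par → Prop where
  | mp {A B : Form var par} : Prv cl (A.imp B) → Prv cl A → Prv cl B
  | k {A B : Form var par} : Prv cl (A.imp (B.imp A))
  | s {A B C : Form var par} :
      Prv cl ((A.imp (B.imp C)).imp ((A.imp B).imp (A.imp C)))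
  | andI {A B : Form var par} : Prv cl (A.imp (B.imp (A.and B)))
  | andE1 {A B : Form var par} : Prv cl ((A.and B).imp A)
  | andE2 {A B : Form var par} : Prv cl ((A.and B).imp B)
  | orI1 {A B : Form var par} : Prv cl (A.imp (A.or B))
  | orI2 {A B : Form var par} : Prv cl (B.imp (A.or B))
  | orE {A B C : Form var par} :
      Prv cl ((A.imp C).imp ((B.imp C).imp ((A.or B).imp C)))
  | exf {A : Form var par} : Prv cl (Form.bot.imp A)
  | dne {A : Form var par} : cl = true → Prv cl (A.neg.neg.imp A)

/-- `U` is the uniform post-interpolant of `A` with respect to the parameters. -/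
def IsUPI {var par : Type} (cl : Bool) (A U : Form var par) : Prop :=
  U.varFree ∧ Prv cl (A.imp U) ∧
    ∀ C : Form var par, C.varFree → Prv cl (A.imp C) → Prv cl (U.imp C)

section Aux
variable {var par : Type}

theorem Form.subst_varFree (θ : var → Form var par) {C : Form var par}
    (h : C.varFree) : Form.subst θ C = C := by
  induction C <;> simp_all [Form.varFree, Form.subst]

theorem Prv.id {cl : Bool} (A : Form var par) : Prv cl (A.imp A) :=
  (Prv.s (A := A) (B := A.imp A) (C := A)).mp Prv.k |>.mp Prv.k

theorem Prv.substitution {cl : Bool} {F : Form var par} (θ : var → Form var par)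
    (h : Prv cl F) : Prv cl (F.subst θ) := by
  induction h with
  | mp h1 h2 ih1 ih2 => exact ih1.mp ih2
  | k => exact Prv.k
  | s => exact Prv.s
  | andI => exact Prv.andI
  | andE1 => exact Prv.andE1
  | andE2 => exact Prv.andE2
  | orI1 => exact Prv.orI1
  | orI2 => exact Prv.orI2
  | orE => exact Prv.orE
  | exf => exact Prv.exf
  | dne hcl => exact Prv.dne hcl

/-- Derivability from a list of hypotheses. -/
inductive Der {var par : Type} (cl : Bool) : List (Form var par) → Form var par → Prop
  | ax {Γ A} : Prv cl A → Der cl Γ A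
  | hyp {Γ A} : A ∈ Γ → Der cl Γ A
  | mp {Γ A B} : Der cl Γ (A.imp B) → Der cl Γ A → Der cl Γ B

theorem Der.weaken {cl : Bool} {Γ Δ : List (Form var par)} {B : Form var par}
    (hs : ∀ x ∈ Γ, x ∈ Δ) (h : Der cl Γ B) : Der cl Δ B := by
  induction h with
  | ax h => exact Der.ax h
  | hyp h => exact Der.hyp (hs _ h)
  | mp _ _ ih1 ih2 => exact ih1.mp ih2

theorem Der.ded {cl : Bool} {Γ : List (Form var par)} {A B : Form var par}
    (h : Der cl (A :: Γ) B) : Der cl Γ (A.imp B) := by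
  induction h with
  | ax h => exact (Der.ax Prv.k).mp (Der.ax h)
  | hyp h =>
    rcases List.mem_cons.mp h with rfl | h
    · exact Der.ax (Prv.id _)
    · exact (Der.ax Prv.k).mp (Der.hyp h)
  | mp _ _ ih1 ih2 => exact ((Der.ax Prv.s).mp ih1).mp ih2

theorem Der.toPrv {cl : Bool} {B : Form var par} (h : Der cl [] B) : Prv cl B := by
  have gen : ∀ {Γ : List (Form var par)} {B}, Der cl Γ B → (∀ x ∈ Γ, Prv cl x) → Prv cl B := by
    intro Γ B h
    induction h with
    | ax h => exact fun _ => h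
    | hyp h => exact fun hΓ => hΓ _ h
    | mp _ _ ih1 ih2 => exact fun hΓ => (ih1 hΓ).mp (ih2 hΓ)
  exact gen h (by simp)

theorem Der.fiffI {cl : Bool} {Γ : List (Form var par)} {A B : Form var par}
    (h1 : Der cl Γ (A.imp B)) (h2 : Der cl Γ (B.imp A)) : Der cl Γ (A.fiff B) :=
  ((Der.ax Prv.andI).mp h1).mp h2

theorem Der.fiff1 {cl : Bool} {Γ : List (Form var par)} {A B : Form var par}
    (h : Der cl Γ (A.fiff B)) : Der cl Γ (A.imp B) :=
  (Der.ax Prv.andE1).mp h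

theorem Der.fiff2 {cl : Bool} {Γ : List (Form var par)} {A B : Form var par}
    (h : Der cl Γ (A.fiff B)) : Der cl Γ (B.imp A) :=
  (Der.ax Prv.andE2).mp h

theorem Der.fiff_refl {cl : Bool} {Γ : List (Form var par)} (A : Form var par) :
    Der cl Γ (A.fiff A) :=
  Der.fiffI (Der.ax (Prv.id A)) (Der.ax (Prv.id A))

theorem Der.imp_cong {cl : Bool} {Γ : List (Form var par)} {A A' B B' : Form var par}
    (h1 : Der cl Γ (A.fiff A')) (h2 : Der cl Γ (B.fiff B')) :
    Der cl Γ ((A.imp B).fiff (A'.imp B')) := by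
  have half : ∀ {A A' B B' : Form var par},
      Der cl Γ (A'.imp A) → Der cl Γ (B.imp B') →
      Der cl Γ ((A.imp B).imp (A'.imp B')) := by
    intro A A' B B' ha hb
    apply Der.ded; apply Der.ded
    have w : ∀ x ∈ Γ, x ∈ A' :: A.imp B :: Γ := fun x hx => by simp [hx]
    refine Der.mp (hb.weaken w) (Der.mp (Der.hyp ?_) (Der.mp (ha.weaken w) (Der.hyp ?_)))
      <;> simp
  exact Der.fiffI (half h1.fiff2 h2.fiff1) (half h1.fiff1 h2.fiff2)

theorem Der.and_cong {cl : Bool} {Γ : List (Form var par)} {A A' B B' : Form var par}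
    (h1 : Der cl Γ (A.fiff A')) (h2 : Der cl Γ (B.fiff B')) :
    Der cl Γ ((A.and B).fiff (A'.and B')) := by
  have half : ∀ {A A' B B' : Form var par},
      Der cl Γ (A.imp A') → Der cl Γ (B.imp B') →
      Der cl Γ ((A.and B).imp (A'.and B')) := by
    intro A A' B B' ha hb
    apply Der.ded
    have w : ∀ x ∈ Γ, x ∈ A.and B :: Γ := fun x hx => by simp [hx]
    have hab : Der cl (A.and B :: Γ) (A.and B) := Der.hyp (by simp)
    exact ((Der.ax Prv.andI).mp ((ha.weaken w).mp ((Der.ax Prv.andE1).mp hab))).mp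
      ((hb.weaken w).mp ((Der.ax Prv.andE2).mp hab))
  exact Der.fiffI (half h1.fiff1 h2.fiff1) (half h1.fiff2 h2.fiff2)

theorem Der.or_cong {cl : Bool} {Γ : List (Form var par)} {A A' B B' : Form var par}
    (h1 : Der cl Γ (A.fiff A')) (h2 : Der cl Γ (B.fiff B')) :
    Der cl Γ ((A.or B).fiff (A'.or B')) := by
  have half : ∀ {A A' B B' : Form var par},
      Der cl Γ (A.imp A') → Der cl Γ (B.imp B') →
      Der cl Γ ((A.or B).imp (A'.or B')) := by
    intro A A' B B' ha hb
    have bra : Der cl Γ (A.imp (A'.or B')) := by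
      apply Der.ded
      have w : ∀ x ∈ Γ, x ∈ A :: Γ := fun x hx => by simp [hx]
      exact (Der.ax Prv.orI1).mp ((ha.weaken w).mp (Der.hyp (by simp)))
    have brb : Der cl Γ (B.imp (A'.or B')) := by
      apply Der.ded
      have w : ∀ x ∈ Γ, x ∈ B :: Γ := fun x hx => by simp [hx]
      exact (Der.ax Prv.orI2).mp ((hb.weaken w).mp (Der.hyp (by simp)))
    exact ((Der.ax Prv.orE).mp bra).mp brb
  exact Der.fiffI (half h1.fiff1 h2.fiff1) (half h1.fiff2 h2.fiff2)

theorem subst_fiff {cl : Bool} {A : Form var par} {θ : var → Form var par}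
    (hid : ∀ x : var, Prv cl (A.imp ((θ x).fiff (Form.v x))))
    (C : Form var par) : Der cl [A] ((Form.subst θ C).fiff C) := by
  induction C with
  | bot => exact Der.fiff_refl _
  | v x => exact (Der.ax (hid x)).mp (Der.hyp (by simp))
  | p q => exact Der.fiff_refl _
  | and C D ihC ihD => exact ihC.and_cong ihD
  | or C D ihC ihD => exact ihC.or_cong ihD
  | imp C D ihC ihD => exact ihC.imp_cong ihD

end Aux

/-- Uniqueness of projections (classical and intuitionistic). -/
theorem projection_unique {var par : Type} (cl : Bool) (A B₁ B₂ : Form var par)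
    (θ₁ θ₂ : var → Form var par)
    (hB₁ : B₁.varFree) (hB₂ : B₂.varFree)
    (hid₁ : ∀ x : var, Prv cl (A.imp ((θ₁ x).fiff (Form.v x))))
    (hid₂ : ∀ x : var, Prv cl (A.imp ((θ₂ x).fiff (Form.v x))))
    (he₁ : Prv cl ((Form.subst θ₁ A).fiff B₁))
    (he₂ : Prv cl ((Form.subst θ₂ A).fiff B₂)) :
    Prv cl (B₁.fiff B₂) := by
  have comp : ∀ {X Y Z : Form var par},
      Prv cl (X.imp Y) → Prv cl (Y.imp Z) → Prv cl (X.imp Z) := by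
    intro X Y Z h1 h2
    exact Der.toPrv (Der.ded ((Der.ax h2).mp ((Der.ax h1).mp (Der.hyp (by simp)))))
  -- A proves B₁ and B₂
  have hA : ∀ (θ : var → Form var par) (B : Form var par),
      (∀ x : var, Prv cl (A.imp ((θ x).fiff (Form.v x)))) →
      Prv cl ((Form.subst θ A).fiff B) → Prv cl (A.imp B) := by
    intro θ B hid he
    apply Der.toPrv; apply Der.ded
    exact ((Der.ax he).fiff1).mp ((subst_fiff hid A).fiff2.mp (Der.hyp (by simp)))
  have hAB₁ : Prv cl (A.imp B₁) := hA θ₁ B₁ hid₁ he₁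
  have hAB₂ : Prv cl (A.imp B₂) := hA θ₂ B₂ hid₂ he₂
  -- substitute θ₁ into A.imp B₂ and θ₂ into A.imp B₁
  have h12 : Prv cl (B₁.imp B₂) := by
    have h := Prv.substitution θ₁ hAB₂
    simp only [Form.subst] at h
    rw [Form.subst_varFree θ₁ hB₂] at h
    exact comp ((Prv.andE2).mp he₁) h
  have h21 : Prv cl (B₂.imp B₁) := by
    have h := Prv.substitution θ₂ hAB₁
    simp only [Form.subst] at h
    rw [Form.subst_varFree θ₂ hB₁] at h
    exact comp ((Prv.andE2).mp he₂) h
  exact (Prv.andI.mp h12).mp h21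
end

section
/- If θ is a projective unifier of A ↔ U (i.e. ⊢ θ(A ↔ U) and (A ↔ U) ⊢ θ(x) ↔ x for all variables x), where U is the uniform post-interpolant of A with respect to the parameters, then θ is a projective parametrifier of A: ⊢ θ(A) ↔ U and A ⊢ θ(x) ↔ x for all variables x. -/
theorem subst_varFree {var par : Type} (θ : var → Form var par) :
    ∀ B : Form var par, B.varFree → Form.subst θ B = B
  | .bot, _ => rfl
  | .p _, _ => rfl
  | .and A B, h => by
      simp only [Form.subst, subst_varFree θ A h.1, subst_varFree θ B h.2]
  | .or A B, h => by
      simp only [Form.subst, subst_varFree θ A h.1, subst_varFree θ B h.2]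
  | .imp A B, h => by
      simp only [Form.subst, subst_varFree θ A h.1, subst_varFree θ B h.2]

theorem prv_imp_self {var par : Type} (cl : Bool) (A : Form var par) :
    Prv cl (A.imp A) :=
  Prv.mp (Prv.mp Prv.s (Prv.k (B := A.imp A))) (Prv.k (B := A))

theorem prv_ap {var par : Type} {cl : Bool} {A B C : Form var par}
    (h1 : Prv cl (A.imp (B.imp C))) (h2 : Prv cl (A.imp B)) :
    Prv cl (A.imp C) :=
  Prv.mp (Prv.mp Prv.s h1) h2

theorem prv_const {var par : Type} {cl : Bool} {A B : Form var par}
    (h : Prv cl B) : Prv cl (A.imp B) :=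
  Prv.mp Prv.k h

/-- A projective unifier of `A ↔ U(A)` is a projective parametrifier of `A`. -/
theorem proj_unifier_is_parametrifier {var par : Type} (cl : Bool) (A U : Form var par)
    (θ : var → Form var par)
    (hU : IsUPI cl A U)
    (hu : Prv cl (Form.subst θ (A.fiff U)))
    (hid : ∀ x : var, Prv cl ((A.fiff U).imp ((θ x).fiff (Form.v x)))) :
    Prv cl ((Form.subst θ A).fiff U) ∧
      ∀ x : var, Prv cl (A.imp ((θ x).fiff (Form.v x))) := by
  obtain ⟨hvf, hAU, -⟩ := hU
  have hsU : Form.subst θ U = U := subst_varFree θ U hvf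
  constructor
  · have : Form.subst θ (A.fiff U) = (Form.subst θ A).fiff U := by
      simp [Form.fiff, Form.subst, hsU]
    rwa [this] at hu
  · intro x
    have hAiff : Prv cl (A.imp (A.fiff U)) :=
      prv_ap (prv_const (Prv.mp Prv.andI hAU)) Prv.k
    exact prv_ap (prv_const (hid x)) hAiff
end

section
/- In classical propositional logic, an atom x is positive in A (meaning: for all Boolean valuations I, J with I(x) ≤ J(x) and I agreeing with J on all other atoms, I(A) ≤ J(A)) if and only if ⊢ A → A[x := ⊤]. -/
/-- Boolean evaluation of a formula under a valuation of the atoms. -/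
def evalF {var par : Type} (I : var ⊕ par → Bool) : Form var par → Bool
  | .bot => false
  | .v x => I (.inl x)
  | .p q => I (.inr q)
  | .and A B => evalF I A && evalF I B
  | .or A B => evalF I A || evalF I B
  | .imp A B => !evalF I A || evalF I B

def atomF {var par : Type} : var ⊕ par → Form var par
  | .inl x => .v x
  | .inr q => .p q

/-- Syntactic replacement of the atom `a` by the formula `C`. -/
def replaceAtom {var par : Type} [DecidableEq var] [DecidableEq par]
    (a : var ⊕ par) (C : Form var par) : Form var par → Form var par
  | .bot => .bot
  | .v x => if (Sum.inl x : var ⊕ par) = a then C else .v x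
  | .p q => if (Sum.inr q : var ⊕ par) = a then C else .p q
  | .and A B => (replaceAtom a C A).and (replaceAtom a C B)
  | .or A B => (replaceAtom a C A).or (replaceAtom a C B)
  | .imp A B => (replaceAtom a C A).imp (replaceAtom a C B)

/-- The atom `a` is positive in `A`. -/
def PositiveIn {var par : Type} (a : var ⊕ par) (A : Form var par) : Prop :=
  ∀ I J : var ⊕ par → Bool, I a ≤ J a → (∀ b, b ≠ a → I b = J b) →
    evalF I A ≤ evalF J A

/-- Classical (semantic) validity: a tautology. -/
def Valid {var par : Type} (A : Form var par) : Prop :=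
  ∀ I : var ⊕ par → Bool, evalF I A = true

lemma eval_replaceAtom {var par : Type} [DecidableEq var] [DecidableEq par]
    (a : var ⊕ par) (C : Form var par) (I : var ⊕ par → Bool) (A : Form var par) :
    evalF I (replaceAtom a C A) = evalF (fun b => if b = a then evalF I C else I b) A := by
  induction A with
  | bot => rfl
  | v x => simp [replaceAtom, evalF]; split <;> simp_all [evalF]
  | p q => simp [replaceAtom, evalF]; split <;> simp_all [evalF]
  | and A B ihA ihB => simp [replaceAtom, evalF, ihA, ihB]
  | or A B ihA ihB => simp [replaceAtom, evalF, ihA, ihB]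
  | imp A B ihA ihB => simp [replaceAtom, evalF, ihA, ihB]

lemma btle {x : Bool} (h : true ≤ x) : x = true := by
  cases x
  · exact absurd h (by decide)
  · rfl

/-- An atom is positive in `A` iff `A → A[x := ⊤]` is classically valid. -/
theorem positive_iff_subst_top {var par : Type} [DecidableEq var] [DecidableEq par]
    (a : var ⊕ par) (A : Form var par) :
    PositiveIn a A ↔ Valid (A.imp (replaceAtom a Form.top A)) := by
  have e : ∀ I : var ⊕ par → Bool, evalF I (replaceAtom a Form.top A) =
      evalF (fun b => if b = a then true else I b) A := by
    intro I
    rw [eval_replaceAtom]; congr 1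
  constructor
  · intro hpos I
    have h : evalF I A ≤ evalF (fun b => if b = a then true else I b) A :=
      hpos I _ (by simp) (fun b hb => by simp [hb])
    simp only [evalF, e]
    cases hA : evalF I A
    · simp
    · rw [hA] at h
      rw [btle h]
      simp
  · intro hv I J hle hagree
    by_cases h : I a = J a
    · have hIJ : I = J := funext fun b => by
        by_cases hb : b = a
        · rw [hb, h]
        · exact hagree b hb
      rw [hIJ]
    · have hIJa : I a = false ∧ J a = true := by
        revert hle h; cases I a <;> cases J a <;> decide
      have hJeq : J = fun b => if b = a then true else I b := funext fun b => by
        by_cases hb : b = a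
        · rw [hb, if_pos rfl]; exact hIJa.2
        · rw [if_neg hb]; exact (hagree b hb).symm
      have h2 := hv I
      simp only [evalF, e] at h2
      rw [hJeq]
      cases hA : evalF I A
      · exact Bool.false_le _
      · rw [hA] at h2
        simp only [Bool.not_true, Bool.false_or] at h2
        rw [h2]
end

section
/- In classical propositional logic with variables and parameters, if A has a unifier τ (a substitution fixing parameters with ⊢ τ(A)), then A is projective: the substitution ε defined by ε(x) := (A ∧ x) ∨ (¬A ∧ τ(x)) for each variable x satisfies ⊢ ε(A) and A ⊢ ε(x) ↔ x for every variable x. -/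
/-!
Under the hypothesis `A` the substitution `ε = A.projUnifier τ` sends every variable `x` to a
formula equivalent to `x`, and under `¬A` to one equivalent to `τ x`. Since equivalence of
formulas is a congruence, `ε B ↔ B` follows from `A` and `ε B ↔ τ B` from `¬A`, for every
formula `B`. Taking `B = A`, the case `A` gives `ε A` directly and the case `¬A` gives it from
`⊢ τ A`; excluded middle combines the two cases.
-/

namespace Form

variable {var par : Type}

theorem subst_v (B : Form var par) : B.subst Form.v = B := by
  induction B with
  | bot | v | p => rfl
  | and B C ihB ihC | or B C ihB ihC | imp B C ihB ihC => simp only [subst, ihB, ihC]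

def projUnifier (A : Form var par) (τ : var → Form var par) (x : var) : Form var par :=
  (A.and (Form.v x)).or (A.neg.and (τ x))

end Form

theorem Prv.imp_self {var par : Type} {cl : Bool} {A : Form var par} : Prv cl (A.imp A) :=
  Prv.mp (Prv.mp (Prv.s (B := A.imp A)) Prv.k) Prv.k

inductive Derives {var par : Type} (cl : Bool) : List (Form var par) → Form var par → Prop where
  | hyp {Γ A} : A ∈ Γ → Derives cl Γ A
  | ax {Γ A} : Prv cl A → Derives cl Γ A
  | mp {Γ A B} : Derives cl Γ (A.imp B) → Derives cl Γ A → Derives cl Γ B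

namespace Derives

variable {var par : Type} {cl : Bool} {Γ Δ : List (Form var par)} {A A' B B' C : Form var par}

theorem toPrv (h : Derives cl [] A) : Prv cl A := by
  generalize hΓ : ([] : List (Form var par)) = Γ at h
  induction h with
  | hyp hA => subst hΓ; simp at hA
  | ax hA => exact hA
  | mp _ _ ihAB ihA => exact Prv.mp ihAB ihA

theorem mono (h : Derives cl Γ A) (hΓ : Γ ⊆ Δ) : Derives cl Δ A := by
  induction h with
  | hyp hA => exact hyp (hΓ hA)
  | ax hA => exact ax hA
  | mp _ _ ihAB ihA => exact mp ihAB ihA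

theorem weaken (h : Derives cl Γ A) : Derives cl (B :: Γ) A :=
  h.mono (List.subset_cons_self B Γ)

theorem head : Derives cl (A :: Γ) A :=
  hyp List.mem_cons_self

theorem deduction (h : Derives cl Δ B) (hΔ : Δ ⊆ A :: Γ) : Derives cl Γ (A.imp B) := by
  induction h with
  | hyp hB =>
    rcases List.mem_cons.mp (hΔ hB) with rfl | hB
    · exact ax Prv.imp_self
    · exact mp (ax Prv.k) (hyp hB)
  | ax hB => exact mp (ax Prv.k) (ax hB)
  | mp _ _ ihBC ihB => exact mp (mp (ax Prv.s) ihBC) ihB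

theorem imp_intro (h : Derives cl (A :: Γ) B) : Derives cl Γ (A.imp B) :=
  h.deduction (List.Subset.refl _)

theorem and_intro (hA : Derives cl Γ A) (hB : Derives cl Γ B) : Derives cl Γ (A.and B) :=
  mp (mp (ax Prv.andI) hA) hB

theorem and_left (h : Derives cl Γ (A.and B)) : Derives cl Γ A :=
  mp (ax Prv.andE1) h

theorem and_right (h : Derives cl Γ (A.and B)) : Derives cl Γ B :=
  mp (ax Prv.andE2) h

theorem or_inl (h : Derives cl Γ A) : Derives cl Γ (A.or B) :=
  mp (ax Prv.orI1) h

theorem or_inr (h : Derives cl Γ B) : Derives cl Γ (A.or B) :=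
  mp (ax Prv.orI2) h

theorem or_elim (h : Derives cl Γ (A.or B)) (hA : Derives cl (A :: Γ) C)
    (hB : Derives cl (B :: Γ) C) : Derives cl Γ C :=
  mp (mp (mp (ax Prv.orE) hA.imp_intro) hB.imp_intro) h

theorem bot_elim (h : Derives cl Γ Form.bot) : Derives cl Γ A :=
  mp (ax Prv.exf) h

theorem em : Derives true Γ (A.or A.neg) := by
  refine mp (ax (Prv.dne rfl)) (imp_intro ?_)
  have hnA : Derives true ((A.or A.neg).neg :: Γ) A.neg :=
    imp_intro (mp head.weaken (or_inl head))
  exact mp head (or_inr hnA)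

theorem by_cases (hA : Derives true (A :: Γ) C) (hnA : Derives true (A.neg :: Γ) C) :
    Derives true Γ C :=
  or_elim em hA hnA

theorem iff_intro (hAB : Derives cl Γ (A.imp B)) (hBA : Derives cl Γ (B.imp A)) :
    Derives cl Γ (A.fiff B) :=
  and_intro hAB hBA

theorem iff_mp (h : Derives cl Γ (A.fiff B)) : Derives cl Γ (A.imp B) :=
  and_left h

theorem iff_mpr (h : Derives cl Γ (A.fiff B)) : Derives cl Γ (B.imp A) :=
  and_right h

theorem iff_refl : Derives cl Γ (A.fiff A) :=
  iff_intro (imp_intro head) (imp_intro head)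

theorem and_congr (hA : Derives cl Γ (A.fiff A')) (hB : Derives cl Γ (B.fiff B')) :
    Derives cl Γ ((A.and B).fiff (A'.and B')) :=
  iff_intro
    (imp_intro (and_intro (mp hA.iff_mp.weaken (and_left head))
      (mp hB.iff_mp.weaken (and_right head))))
    (imp_intro (and_intro (mp hA.iff_mpr.weaken (and_left head))
      (mp hB.iff_mpr.weaken (and_right head))))

theorem or_congr (hA : Derives cl Γ (A.fiff A')) (hB : Derives cl Γ (B.fiff B')) :
    Derives cl Γ ((A.or B).fiff (A'.or B')) :=
  iff_intro
    (imp_intro (or_elim head (or_inl (mp hA.iff_mp.weaken.weaken head))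
      (or_inr (mp hB.iff_mp.weaken.weaken head))))
    (imp_intro (or_elim head (or_inl (mp hA.iff_mpr.weaken.weaken head))
      (or_inr (mp hB.iff_mpr.weaken.weaken head))))

theorem imp_congr (hA : Derives cl Γ (A.fiff A')) (hB : Derives cl Γ (B.fiff B')) :
    Derives cl Γ ((A.imp B).fiff (A'.imp B')) :=
  iff_intro
    (imp_intro (imp_intro
      (mp hB.iff_mp.weaken.weaken (mp head.weaken (mp hA.iff_mpr.weaken.weaken head)))))
    (imp_intro (imp_intro
      (mp hB.iff_mpr.weaken.weaken (mp head.weaken (mp hA.iff_mp.weaken.weaken head)))))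

theorem subst_congr {σ θ : var → Form var par} (h : ∀ x, Derives cl Γ ((σ x).fiff (θ x)))
    (B : Form var par) : Derives cl Γ ((B.subst σ).fiff (B.subst θ)) := by
  induction B with
  | bot | p => exact iff_refl
  | v x => exact h x
  | and B C ihB ihC => exact and_congr ihB ihC
  | or B C ihB ihC => exact or_congr ihB ihC
  | imp B C ihB ihC => exact imp_congr ihB ihC

theorem projUnifier_iff_self (τ : var → Form var par) (x : var) :
    Derives cl (A :: Γ) ((A.projUnifier τ x).fiff (Form.v x)) :=
  iff_intro
    (imp_intro (or_elim head (and_right head)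
      (bot_elim (mp (and_left head) head.weaken.weaken))))
    (imp_intro (or_inl (and_intro head.weaken head)))

theorem projUnifier_iff_unifier (τ : var → Form var par) (x : var) :
    Derives cl (A.neg :: Γ) ((A.projUnifier τ x).fiff (τ x)) :=
  iff_intro
    (imp_intro (or_elim head (bot_elim (mp head.weaken.weaken (and_left head)))
      (and_right head)))
    (imp_intro (or_inr (and_intro head.weaken head)))

end Derives

/-- In classical logic, a unifiable formula is projective via
`ε(x) := (A ∧ x) ∨ (¬A ∧ τ(x))`. -/
theorem classical_unifiable_projective {var par : Type} (A : Form var par)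
    (τ : var → Form var par) (h : Prv true (Form.subst τ A)) :
    Prv true (Form.subst (fun x => ((A.and (Form.v x)).or (A.neg.and (τ x)))) A) ∧
      ∀ x : var,
        Prv true (A.imp ((((A.and (Form.v x)).or (A.neg.and (τ x)))).fiff (Form.v x))) := by
  open Derives in
  have under_A : Derives true [A] ((A.subst (A.projUnifier τ)).fiff A) := by
    simpa only [Form.subst_v] using subst_congr (projUnifier_iff_self τ) A
  have under_nA : Derives true [A.neg] ((A.subst (A.projUnifier τ)).fiff (A.subst τ)) :=
    subst_congr (projUnifier_iff_unifier τ) A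
  refine ⟨toPrv (by_cases (mp under_A.iff_mpr head) (mp under_nA.iff_mpr (ax h))), fun x => ?_⟩
  exact toPrv (imp_intro (projUnifier_iff_self τ x))
end

section
/- In classical propositional logic with variables and parameters, the following are equivalent for a formula A: (1) A is unifiable; (2) A is projective; (3) the uniform post-interpolant of A with respect to the parameters is ⊤ (i.e. every variable-free classical consequence of A is a tautology). -/
/-!
Classically, `A` is unifiable exactly when `∃ vars, A` is a tautology. Boole's expansion
`∃ x, A ≡ A[⊤/x] ∨ A[⊥/x]` computes `∃ vars, A` as a variable-free consequence of `A`, and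
a unifier `θ` of `A[⊤/x] ∨ A[⊥/x]` gives the unifier `θ ∘ [A[⊤/x]/x]` of `A`. Conversely,
a unifier `θ` of `A` turns a variable-free consequence `A → E` into `θ(A) → E`, so `E` is
provable. Löwenheim's substitution `x ↦ (A ∧ x) ∨ (¬A ∧ θ x)` makes any unifier `θ`
projective, as it is the identity wherever `A` holds. Kalmár's completeness proof transfers
these truth-table arguments to the Hilbert calculus.
-/

section

variable {var par : Type}

namespace Form

def eval (w : var ⊕ par → Bool) : Form var par → Bool
  | bot => false
  | v x => w (.inl x)
  | p q => w (.inr q)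
  | and A B => A.eval w && B.eval w
  | or A B => A.eval w || B.eval w
  | imp A B => !A.eval w || B.eval w

def IsTaut (A : Form var par) : Prop := ∀ w, A.eval w = true

def atoms : Form var par → List (var ⊕ par)
  | bot => []
  | v x => [.inl x]
  | p q => [.inr q]
  | and A B | or A B | imp A B => A.atoms ++ B.atoms

def atom : var ⊕ par → Form var par := Sum.elim v p

def signed (b : Bool) (A : Form var par) : Form var par := bif b then A else A.neg

def lit (w : var ⊕ par → Bool) (a : var ⊕ par) : Form var par := signed (w a) (atom a)

def substVal (w : var ⊕ par → Bool) (θ : var → Form var par) : var ⊕ par → Bool :=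
  Sum.elim (fun x => (θ x).eval w) (w ∘ .inr)

theorem eval_subst (w : var ⊕ par → Bool) (θ : var → Form var par) (A : Form var par) :
    (A.subst θ).eval w = A.eval (substVal w θ) := by
  induction A <;> simp_all [subst, eval, substVal]

theorem subst_subst (σ τ : var → Form var par) (A : Form var par) :
    (A.subst τ).subst σ = A.subst fun x => (τ x).subst σ := by
  induction A <;> simp_all [subst]

theorem subst_eq_self_of_varFree {A : Form var par} (h : A.varFree) (θ : var → Form var par) :
    A.subst θ = A := by
  induction A <;> simp_all [subst, varFree]

theorem varFree_of_forall_inl_notMem_atoms {A : Form var par}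
    (h : ∀ x, .inl x ∉ A.atoms) : A.varFree := by
  induction A <;> simp_all [varFree, atoms]

theorem exists_inl_mem_atoms_of_inl_mem_atoms_subst {θ : var → Form var par}
    {A : Form var par} {y : var} (h : .inl y ∈ (A.subst θ).atoms) :
    ∃ x, .inl x ∈ A.atoms ∧ .inl y ∈ (θ x).atoms := by
  induction A with
  | bot => simp [subst, atoms] at h
  | v x => exact ⟨x, by simp [atoms], h⟩
  | p q => simp [subst, atoms] at h
  | and A B ihA ihB | or A B ihA ihB | imp A B ihA ihB =>
    simp only [subst, atoms, List.mem_append] at h ⊢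
    rcases h with h | h
    · obtain ⟨x, hx, hy⟩ := ihA h; exact ⟨x, .inl hx, hy⟩
    · obtain ⟨x, hx, hy⟩ := ihB h; exact ⟨x, .inr hx, hy⟩

end Form

open Form

namespace Prv

variable {cl : Bool}

theorem imp_self_s7 (A : Form var par) : Prv cl (A.imp A) :=
  mp (mp (s (B := A.imp A)) k) k

theorem subst {A : Form var par} (θ : var → Form var par) (h : Prv cl A) :
    Prv cl (A.subst θ) := by
  induction h with
  | mp _ _ ih₁ ih₂ => exact mp ih₁ ih₂
  | k => exact k
  | s => exact s
  | andI => exact andI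
  | andE1 => exact andE1
  | andE2 => exact andE2
  | orI1 => exact orI1
  | orI2 => exact orI2
  | orE => exact orE
  | exf => exact exf
  | dne h => exact dne h

theorem isTaut {A : Form var par} (h : Prv cl A) : A.IsTaut := by
  induction h with
  | mp _ _ ih₁ ih₂ =>
    intro w
    simpa [eval, ih₂ w] using ih₁ w
  | _ => intro w; simp only [eval, neg]; grind

end Prv

inductive Der_s7 (cl : Bool) (Γ : List (Form var par)) : Form var par → Prop
  | hyp {A : Form var par} : A ∈ Γ → Der_s7 cl Γ A
  | prv {A : Form var par} : Prv cl A → Der_s7 cl Γ A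
  | mp {A B : Form var par} : Der_s7 cl Γ (A.imp B) → Der_s7 cl Γ A → Der_s7 cl Γ B

namespace Der_s7

variable {cl : Bool} {Γ Δ : List (Form var par)} {A B : Form var par}

theorem mono (h : Der_s7 cl Γ A) (hΓ : Γ ⊆ Δ) : Der_s7 cl Δ A := by
  induction h with
  | hyp h => exact hyp (hΓ h)
  | prv h => exact prv h
  | mp _ _ ih₁ ih₂ => exact mp ih₁ ih₂

theorem imp_intro (h : Der_s7 cl (B :: Γ) A) : Der_s7 cl Γ (B.imp A) := by
  induction h with
  | hyp h =>
    rcases List.mem_cons.1 h with rfl | h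
    · exact prv (Prv.imp_self_s7 _)
    · exact mp (prv Prv.k) (hyp h)
  | prv h => exact mp (prv Prv.k) (prv h)
  | mp _ _ ih₁ ih₂ => exact mp (mp (prv Prv.s) ih₁) ih₂

theorem prv_of_nil (h : Der_s7 cl [] A) : Prv cl A := by
  induction h with
  | hyp h => simp at h
  | prv h => exact h
  | mp _ _ ih₁ ih₂ => exact Prv.mp ih₁ ih₂

theorem head : Der_s7 cl (A :: Γ) A := hyp List.mem_cons_self

theorem by_cases (h₁ : Der_s7 true (B :: Γ) A) (h₂ : Der_s7 true (B.neg :: Γ) A) :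
    Der_s7 true Γ A := by
  refine mp (prv (Prv.dne rfl)) (imp_intro ?_)
  have hnB : Der_s7 true (A.neg :: Γ) B.neg :=
    imp_intro <| mp (hyp (by simp [neg])) <| mp ((imp_intro h₁).mono fun _ h => by simp [h]) head
  exact mp head (mp ((imp_intro h₂).mono fun _ h => by simp [h]) hnB)

end Der_s7

namespace Prv

variable {cl : Bool}

theorem neg_imp_neg_and_left (A B : Form var par) : Prv cl (A.neg.imp (A.and B).neg) :=
  Der_s7.prv_of_nil <| Der_s7.imp_intro <| Der_s7.imp_intro <|
    Der_s7.mp (Der_s7.hyp (by simp [neg])) (Der_s7.mp (Der_s7.prv andE1) Der_s7.head)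

theorem neg_imp_neg_and_right (A B : Form var par) : Prv cl (B.neg.imp (A.and B).neg) :=
  Der_s7.prv_of_nil <| Der_s7.imp_intro <| Der_s7.imp_intro <|
    Der_s7.mp (Der_s7.hyp (by simp [neg])) (Der_s7.mp (Der_s7.prv andE2) Der_s7.head)

theorem neg_imp_neg_imp_neg_or (A B : Form var par) :
    Prv cl (A.neg.imp (B.neg.imp (A.or B).neg)) :=
  Der_s7.prv_of_nil <| Der_s7.imp_intro <| Der_s7.imp_intro <|
    Der_s7.mp (Der_s7.mp (Der_s7.prv orE) (Der_s7.hyp (by simp [neg]))) Der_s7.head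

theorem neg_imp_imp (A B : Form var par) : Prv cl (A.neg.imp (A.imp B)) :=
  Der_s7.prv_of_nil <| Der_s7.imp_intro <| Der_s7.imp_intro <|
    Der_s7.mp (Der_s7.prv exf) (Der_s7.mp (Der_s7.hyp (by simp [neg])) Der_s7.head)

theorem imp_neg_imp_neg_imp (A B : Form var par) : Prv cl (A.imp (B.neg.imp (A.imp B).neg)) :=
  Der_s7.prv_of_nil <| Der_s7.imp_intro <| Der_s7.imp_intro <| Der_s7.imp_intro <|
    Der_s7.mp (Der_s7.hyp (by simp [neg])) (Der_s7.mp Der_s7.head (Der_s7.hyp (by simp [neg])))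

end Prv

/-- Kalmár's lemma. -/
theorem Der_s7.signed_eval {cl : Bool} (w : var ⊕ par → Bool) (A : Form var par)
    {Γ : List (Form var par)} (hΓ : ∀ a ∈ A.atoms, lit w a ∈ Γ) :
    Der_s7 cl Γ (signed (A.eval w) A) := by
  induction A with
  | bot => exact prv (Prv.imp_self_s7 _)
  | v x => exact hyp (hΓ (.inl x) (by simp [atoms]))
  | p q => exact hyp (hΓ (.inr q) (by simp [atoms]))
  | and A B ihA ihB =>
    have hA := ihA fun a ha => hΓ a (by simp [atoms, ha])
    have hB := ihB fun a ha => hΓ a (by simp [atoms, ha])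
    cases hvA : A.eval w <;> cases hvB : B.eval w <;>
      simp only [signed, eval, hvA, hvB] at hA hB ⊢
    · exact mp (prv (Prv.neg_imp_neg_and_left A B)) hA
    · exact mp (prv (Prv.neg_imp_neg_and_left A B)) hA
    · exact mp (prv (Prv.neg_imp_neg_and_right A B)) hB
    · exact mp (mp (prv Prv.andI) hA) hB
  | or A B ihA ihB =>
    have hA := ihA fun a ha => hΓ a (by simp [atoms, ha])
    have hB := ihB fun a ha => hΓ a (by simp [atoms, ha])
    cases hvA : A.eval w <;> cases hvB : B.eval w <;>
      simp only [signed, eval, hvA, hvB] at hA hB ⊢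
    · exact mp (mp (prv (Prv.neg_imp_neg_imp_neg_or A B)) hA) hB
    · exact mp (prv Prv.orI2) hB
    · exact mp (prv Prv.orI1) hA
    · exact mp (prv Prv.orI1) hA
  | imp A B ihA ihB =>
    have hA := ihA fun a ha => hΓ a (by simp [atoms, ha])
    have hB := ihB fun a ha => hΓ a (by simp [atoms, ha])
    cases hvA : A.eval w <;> cases hvB : B.eval w <;>
      simp only [signed, eval, hvA, hvB] at hA hB ⊢
    · exact mp (prv (Prv.neg_imp_imp A B)) hA
    · exact mp (prv (Prv.neg_imp_imp A B)) hA
    · exact mp (mp (prv (Prv.imp_neg_imp_neg_imp A B)) hA) hB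
    · exact mp (prv Prv.k) hB

open Classical in
theorem map_lit_update_subset (w : var ⊕ par → Bool) (a : var ⊕ par) (b : Bool)
    (l : List (var ⊕ par)) :
    (a :: l).map (lit (Function.update w a b)) ⊆ signed b (atom a) :: l.map (lit w) := by
  intro B hB
  simp only [List.map_cons, List.mem_cons, List.mem_map] at hB ⊢
  rcases hB with rfl | ⟨c, hc, rfl⟩
  · simp [lit]
  · by_cases hca : c = a
    · subst hca; simp [lit]
    · exact .inr ⟨c, hc, by simp [lit, hca]⟩

theorem Prv.of_forall_der_map_lit {A : Form var par} (l : List (var ⊕ par))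
    (h : ∀ w, Der_s7 true (l.map (lit w)) A) : Prv true A := by
  induction l with
  | nil => exact Der_s7.prv_of_nil (h fun _ => true)
  | cons a l ih =>
    classical
    exact ih fun w => Der_s7.by_cases
      ((h (Function.update w a true)).mono (map_lit_update_subset w a true l))
      ((h (Function.update w a false)).mono (map_lit_update_subset w a false l))

theorem Prv.of_isTaut {A : Form var par} (h : A.IsTaut) : Prv true A :=
  Prv.of_forall_der_map_lit A.atoms fun w => by
    simpa [h w, signed] using Der_s7.signed_eval w A (Γ := A.atoms.map (lit w)) fun a ha =>
      List.mem_map_of_mem ha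

def Unifiable (A : Form var par) : Prop := ∃ θ : var → Form var par, Prv true (A.subst θ)

def Projective (A : Form var par) : Prop :=
  ∃ θ : var → Form var par,
    Prv true (A.subst θ) ∧ ∀ x, Prv true (A.imp ((θ x).fiff (.v x)))

def lowenheim (A : Form var par) (θ : var → Form var par) : var → Form var par :=
  fun x => (A.and (.v x)).or (A.neg.and (θ x))

theorem substVal_lowenheim (w : var ⊕ par → Bool) (A : Form var par)
    (θ : var → Form var par) :
    substVal w (lowenheim A θ) = bif A.eval w then w else substVal w θ := by
  funext a
  cases a <;> cases hA : A.eval w <;> simp [substVal, lowenheim, eval, neg, hA]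

theorem Unifiable.projective {A : Form var par} (h : Unifiable A) : Projective A := by
  obtain ⟨θ, hθ⟩ := h
  refine ⟨lowenheim A θ, Prv.of_isTaut fun w => ?_, fun x => Prv.of_isTaut fun w => ?_⟩
  · rw [eval_subst, substVal_lowenheim]
    cases hA : A.eval w
    · simpa [eval_subst] using hθ.isTaut w
    · simpa using hA
  · cases hA : A.eval w <;> simp [eval, fiff, lowenheim, neg, hA]

theorem Unifiable.prv_of_varFree {A E : Form var par} (h : Unifiable A) (hE : E.varFree)
    (hAE : Prv true (A.imp E)) : Prv true E := by
  obtain ⟨θ, hθ⟩ := h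
  have hθE : Prv true ((A.subst θ).imp E) := by
    simpa only [subst, subst_eq_self_of_varFree hE] using hAE.subst θ
  exact Prv.mp hθE hθ

section

open Classical

theorem eval_subst_update (w : var ⊕ par → Bool) (x : var) (C A : Form var par) :
    (A.subst (Function.update v x C)).eval w = A.eval (Function.update w (.inl x) (C.eval w)) := by
  rw [eval_subst]
  congr 1
  funext a
  rcases a with y | q
  · by_cases hy : y = x
    · subst hy; simp [substVal]
    · simp [substVal, hy, eval]
  · simp [substVal]

theorem inl_mem_atoms_subst_update {x y : var} {A C : Form var par}
    (hC : ∀ z, .inl z ∉ C.atoms) (h : .inl y ∈ (A.subst (Function.update v x C)).atoms) :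
    .inl y ∈ A.atoms ∧ y ≠ x := by
  obtain ⟨z, hz, hy⟩ := exists_inl_mem_atoms_of_inl_mem_atoms_subst h
  by_cases hzx : z = x
  · subst hzx; simp [hC] at hy
  · obtain rfl : y = z := by simpa [hzx, atoms] using hy
    exact ⟨hz, hzx⟩

noncomputable def elimVar (x : var) (A : Form var par) : Form var par :=
  (A.subst (Function.update v x top)).or (A.subst (Function.update v x bot))

noncomputable def elimVars : List var → Form var par → Form var par
  | [], A => A
  | x :: l, A => elimVars l (elimVar x A)

theorem eval_elimVar (w : var ⊕ par → Bool) (x : var) (A : Form var par) :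
    (elimVar x A).eval w =
      (A.eval (Function.update w (.inl x) true) || A.eval (Function.update w (.inl x) false)) := by
  simp only [elimVar, eval, eval_subst_update]
  rfl

theorem eval_elimVars_of_eval {w : var ⊕ par → Bool} (l : List var) {A : Form var par}
    (h : A.eval w = true) : (elimVars l A).eval w = true := by
  induction l generalizing A with
  | nil => exact h
  | cons x l ih =>
    refine ih ?_
    rw [eval_elimVar]
    cases hx : w (.inl x) <;> simp [← hx, h]

theorem varFree_elimVars (l : List var) {A : Form var par}
    (h : ∀ y, .inl y ∈ A.atoms → y ∈ l) : (elimVars l A).varFree := by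
  induction l generalizing A with
  | nil => exact varFree_of_forall_inl_notMem_atoms fun y hy => by simpa using h y hy
  | cons x l ih =>
    refine ih fun y hy => ?_
    have hTop : ∀ z, .inl z ∉ (top : Form var par).atoms := by simp [top, neg, atoms]
    have hBot : ∀ z, .inl z ∉ (bot : Form var par).atoms := by simp [atoms]
    obtain ⟨hyA, hyx⟩ : .inl y ∈ A.atoms ∧ y ≠ x := by
      simp only [elimVar, atoms, List.mem_append] at hy
      exact hy.elim (inl_mem_atoms_subst_update hTop) (inl_mem_atoms_subst_update hBot)
    simpa [hyx] using h y hyA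

theorem Unifiable.of_elimVar {x : var} {A : Form var par} (h : Unifiable (elimVar x A)) :
    Unifiable A := by
  obtain ⟨θ, hθ⟩ := h
  refine ⟨fun y => (Function.update v x (A.subst (Function.update v x top)) y).subst θ,
    Prv.of_isTaut fun w => ?_⟩
  have hw := hθ.isTaut w
  rw [eval_subst, eval_elimVar] at hw
  rw [← subst_subst, eval_subst, eval_subst_update, eval_subst_update]
  cases hT : A.eval (Function.update (substVal w θ) (.inl x) true) <;> simp_all [eval, top, neg]

theorem Unifiable.of_elimVars (l : List var) {A : Form var par} (h : Unifiable (elimVars l A)) :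
    Unifiable A := by
  induction l generalizing A with
  | nil => exact h
  | cons x l ih => exact (ih h).of_elimVar

noncomputable def existsVars (A : Form var par) : Form var par :=
  elimVars (A.atoms.filterMap Sum.getLeft?) A

theorem varFree_existsVars (A : Form var par) : (existsVars A).varFree :=
  varFree_elimVars _ fun _ hy => List.mem_filterMap.2 ⟨_, hy, rfl⟩

theorem prv_imp_existsVars (A : Form var par) : Prv true (A.imp (existsVars A)) :=
  Prv.of_isTaut fun w => by
    cases hA : A.eval w
    · simp [eval, hA]
    · simp [eval, existsVars, eval_elimVars_of_eval _ hA]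

theorem unifiable_of_prv_existsVars {A : Form var par} (h : Prv true (existsVars A)) :
    Unifiable A :=
  have hE : Unifiable (existsVars A) :=
    ⟨v, by rwa [subst_eq_self_of_varFree (varFree_existsVars A)]⟩
  hE.of_elimVars _

end

theorem unifiable_iff_forall_varFree {A : Form var par} :
    Unifiable A ↔ ∀ E : Form var par, E.varFree → Prv true (A.imp E) → Prv true E :=
  ⟨fun h _ hE hAE => h.prv_of_varFree hE hAE,
    fun h => unifiable_of_prv_existsVars (h _ (varFree_existsVars A) (prv_imp_existsVars A))⟩

end

/-- In classical logic: unifiable ↔ projective ↔ uniform post-interpolant is `⊤`. -/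
theorem classical_unif_proj_upi {var par : Type} (A : Form var par) :
    ((∃ θ : var → Form var par, Prv true (Form.subst θ A)) ↔
      (∃ θ : var → Form var par, Prv true (Form.subst θ A) ∧
        ∀ x : var, Prv true (A.imp ((θ x).fiff (Form.v x))))) ∧
    ((∃ θ : var → Form var par, Prv true (Form.subst θ A)) ↔
      (∀ E : Form var par, E.varFree → Prv true (A.imp E) → Prv true E)) :=
  ⟨⟨Unifiable.projective, fun ⟨θ, hθ, _⟩ => ⟨θ, hθ⟩⟩,
    unifiable_iff_forall_varFree⟩
end

section
/- In classical propositional logic, for any formula A with uniform post-interpolant U w.r.t. the parameters, every variable-free formula E with ⊢ (U → A) → E is a classical tautology. Equivalently, the uniform post-interpolant of U → A with respect to the parameters is ⊤. -/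
namespace PrvAux
variable {var par : Type} {cl : Bool}

theorem mp2 {P Q R : Form var par} (h1 : Prv cl (P.imp (Q.imp R)))
    (h2 : Prv cl (P.imp Q)) : Prv cl (P.imp R) :=
  Prv.mp (Prv.mp Prv.s h1) h2

theorem syl {A B C : Form var par} (h1 : Prv cl (A.imp B))
    (h2 : Prv cl (B.imp C)) : Prv cl (A.imp C) :=
  mp2 (Prv.mp Prv.k h2) h1

theorem idd {A : Form var par} : Prv cl (A.imp A) :=
  mp2 (Prv.k (B := A.imp A)) (Prv.k (B := A))

theorem flip {A B C : Form var par} (h : Prv cl (A.imp (B.imp C))) :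
    Prv cl (B.imp (A.imp C)) := by
  have h1 : Prv cl (B.imp (A.imp (B.imp C))) := Prv.mp Prv.k h
  have h2 : Prv cl (B.imp ((A.imp B).imp (A.imp C))) := syl h1 Prv.s
  exact mp2 h2 Prv.k

end PrvAux

/-- The uniform post-interpolant of `U(A) → A` is `⊤` (classical logic). -/
theorem upi_of_upi_imp_self {var par : Type} (A U : Form var par)
    (hU : IsUPI true A U) :
    ∀ E : Form var par, E.varFree → Prv true ((U.imp A).imp E) → Prv true E := by
  intro E hEvf hE
  open PrvAux in
  have hAE : Prv true (A.imp E) := syl Prv.k hE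
  have hUE : Prv true (U.imp E) := hU.2.2 E hEvf hAE
  have hnUUA : Prv true ((U.imp Form.bot).imp (U.imp A)) :=
    Prv.mp Prv.s (Prv.mp Prv.k Prv.exf)
  have hnUE : Prv true ((U.imp Form.bot).imp E) := syl hnUUA hE
  have assertE : Prv true (E.imp ((E.imp Form.bot).imp Form.bot)) := flip idd
  have h4 : Prv true (U.imp ((E.imp Form.bot).imp Form.bot)) := syl hUE assertE
  have h5 : Prv true ((E.imp Form.bot).imp (U.imp Form.bot)) := flip h4
  have h6 : Prv true ((E.imp Form.bot).imp E) := syl h5 hnUE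
  have h7 : Prv true ((E.imp Form.bot).imp ((E.imp Form.bot).imp Form.bot)) :=
    syl h6 assertE
  have h8 : Prv true ((E.imp Form.bot).imp Form.bot) := mp2 h7 idd
  exact Prv.mp (Prv.dne rfl) h8
end

section
/- In intuitionistic propositional logic, the formula x ∨ ¬x (x a variable) is not par-projective: there is no variable-free E and substitution θ fixing parameters such that ⊢ θ(x ∨ ¬x) ↔ E and (x ∨ ¬x) ⊢ θ(x) ↔ x. -/
section Aux
variable {var par : Type} {cl : Bool}

theorem prv_id (A : Form var par) : Prv cl (A.imp A) :=
  Prv.mp (Prv.mp Prv.s (Prv.k (B := A.imp A))) Prv.k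

theorem prv_top : Prv cl (Form.top : Form var par) := prv_id _

theorem prv_subst {A : Form var par} (σ : var → Form var par) (h : Prv cl A) :
    Prv cl (Form.subst σ A) := by
  induction h with
  | mp _ _ ih1 ih2 => exact Prv.mp ih1 ih2
  | k => exact Prv.k
  | s => exact Prv.s
  | andI => exact Prv.andI
  | andE1 => exact Prv.andE1
  | andE2 => exact Prv.andE2
  | orI1 => exact Prv.orI1
  | orI2 => exact Prv.orI2
  | orE => exact Prv.orE
  | exf => exact Prv.exf
  | dne h => exact Prv.dne h

theorem subst_varFree_s11 (σ : var → Form var par) :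
    ∀ {E : Form var par}, E.varFree → Form.subst σ E = E
  | .bot, _ => rfl
  | .p _, _ => rfl
  | .v _, h => absurd h id
  | .and A B, ⟨hA, hB⟩ => by
      simp only [Form.subst, subst_varFree_s11 σ hA, subst_varFree_s11 σ hB]
  | .or A B, ⟨hA, hB⟩ => by
      simp only [Form.subst, subst_varFree_s11 σ hA, subst_varFree_s11 σ hB]
  | .imp A B, ⟨hA, hB⟩ => by
      simp only [Form.subst, subst_varFree_s11 σ hA, subst_varFree_s11 σ hB]

/-- Aczel slash, used to prove the disjunction property of IPC. -/
def Slash : Form var par → Prop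
  | .bot => False
  | .v x => Prv false (Form.v x : Form var par)
  | .p q => Prv false (Form.p q : Form var par)
  | .and A B => Slash A ∧ Slash B
  | .or A B => Slash A ∨ Slash B
  | .imp A B => Prv false (A.imp B) ∧ (Slash A → Slash B)

theorem slash_prv : ∀ {A : Form var par}, Slash A → Prv false A
  | .bot, h => h.elim
  | .v _, h => h
  | .p _, h => h
  | .and _ _, ⟨hA, hB⟩ => Prv.mp (Prv.mp Prv.andI (slash_prv hA)) (slash_prv hB)
  | .or _ _, Or.inl hA => Prv.mp Prv.orI1 (slash_prv hA)
  | .or _ _, Or.inr hB => Prv.mp Prv.orI2 (slash_prv hB)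
  | .imp _ _, h => h.1

theorem prv_slash {A : Form var par} (h : Prv false A) : Slash A := by
  induction h with
  | mp _ _ ih1 ih2 => exact ih1.2 ih2
  | k => exact ⟨Prv.k, fun sA => ⟨Prv.mp Prv.k (slash_prv sA), fun _ => sA⟩⟩
  | s =>
      exact ⟨Prv.s, fun sABC =>
        ⟨Prv.mp Prv.s sABC.1, fun sAB =>
          ⟨Prv.mp (Prv.mp Prv.s sABC.1) sAB.1,
           fun sA => (sABC.2 sA).2 (sAB.2 sA)⟩⟩⟩
  | andI =>
      exact ⟨Prv.andI, fun sA =>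
        ⟨Prv.mp Prv.andI (slash_prv sA), fun sB => ⟨sA, sB⟩⟩⟩
  | andE1 => exact ⟨Prv.andE1, fun s => s.1⟩
  | andE2 => exact ⟨Prv.andE2, fun s => s.2⟩
  | orI1 => exact ⟨Prv.orI1, Or.inl⟩
  | orI2 => exact ⟨Prv.orI2, Or.inr⟩
  | orE =>
      exact ⟨Prv.orE, fun sAC =>
        ⟨Prv.mp Prv.orE sAC.1, fun sBC =>
          ⟨Prv.mp (Prv.mp Prv.orE sAC.1) sBC.1,
           fun sAB => sAB.elim sAC.2 sBC.2⟩⟩⟩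
  | exf => exact ⟨Prv.exf, False.elim⟩
  | dne h => exact absurd h (by simp)

theorem not_prv_bot : ¬ Prv false (Form.bot : Form var par) :=
  fun h => prv_slash h

theorem disjunction_property {A B : Form var par} (h : Prv false (A.or B)) :
    Prv false A ∨ Prv false B :=
  (prv_slash h).elim (fun s => Or.inl (slash_prv s)) (fun s => Or.inr (slash_prv s))

end Aux

/-- In intuitionistic logic, `x ∨ ¬x` is not par-projective. -/
theorem lem_not_par_projective {var par : Type} (x : var) :
    ¬ ∃ (E : Form var par) (θ : var → Form var par), E.varFree ∧
        Prv false ((Form.subst θ ((Form.v x).or (Form.v x).neg)).fiff E) ∧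
        ∀ y : var,
          Prv false (((Form.v x).or (Form.v x).neg).imp ((θ y).fiff (Form.v y))) := by
  rintro ⟨E, θ, hE, h1, h2⟩
  -- the two substitutions: everything to ⊤, everything to ⊥
  set σ₁ : var → Form var par := fun _ => Form.top with hσ₁
  set σ₀ : var → Form var par := fun _ => Form.bot with hσ₀
  set D₁ : Form var par := Form.subst σ₁ (θ x) with hD₁def
  set D₀ : Form var par := Form.subst σ₀ (θ x) with hD₀def
  -- σ₁(x ∨ ¬x) and σ₀(x ∨ ¬x) are provable
  have stepA₁ : Prv false ((Form.top.or Form.top.neg : Form var par)) :=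
    Prv.mp Prv.orI1 prv_top
  have stepA₀ : Prv false ((Form.bot.or Form.bot.neg : Form var par)) :=
    Prv.mp Prv.orI2 (prv_id _)
  -- from h2 under σ₁ : ⊢ D₁
  have hfiff₁ : Prv false (D₁.fiff Form.top) := by
    have h := prv_subst σ₁ (h2 x)
    exact Prv.mp h stepA₁
  have hD₁ : Prv false D₁ := Prv.mp (Prv.mp Prv.andE2 hfiff₁) prv_top
  -- from h2 under σ₀ : ⊢ ¬D₀
  have hfiff₀ : Prv false (D₀.fiff Form.bot) := by
    have h := prv_subst σ₀ (h2 x)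
    exact Prv.mp h stepA₀
  have hD₀neg : Prv false (D₀.imp Form.bot) := Prv.mp Prv.andE1 hfiff₀
  -- from h1 under σ₁ : ⊢ (D₁ ∨ ¬D₁) ↔ E, hence ⊢ E
  have h1σ : Prv false ((D₁.or D₁.neg).fiff E) := by
    have h := prv_subst σ₁ h1
    have hEfix : Form.subst σ₁ E = E := subst_varFree_s11 σ₁ hE
    have : Form.subst σ₁ ((Form.subst θ ((Form.v x).or (Form.v x).neg)).fiff E)
        = (D₁.or D₁.neg).fiff (Form.subst σ₁ E) := rfl
    rw [this, hEfix] at h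
    exact h
  have hEprv : Prv false E :=
    Prv.mp (Prv.mp Prv.andE1 h1σ) (Prv.mp Prv.orI1 hD₁)
  -- hence ⊢ θx ∨ ¬θx
  have hdisj : Prv false ((θ x).or (θ x).neg) :=
    Prv.mp (Prv.mp Prv.andE2 h1) hEprv
  -- apply the disjunction property
  rcases disjunction_property hdisj with hp | hn
  · -- ⊢ θx : substitute σ₀ to get ⊢ D₀, contradicting ⊢ ¬D₀
    exact not_prv_bot (Prv.mp hD₀neg (prv_subst σ₀ hp))
  · -- ⊢ ¬θx : substitute σ₁ to get ⊢ ¬D₁, contradicting ⊢ D₁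
    have : Prv false (D₁.imp Form.bot) := prv_subst σ₁ hn
    exact not_prv_bot (Prv.mp this hD₁)
end

section
/- If θ is a projective E-fier of A in intuitionistic logic (A ⊢ θ(x) ↔ x for all variables x, ⊢ θ(A) ↔ E, E variable-free), then A is E-extendable: ⊢ A → E, and for every finite rooted Kripke model K such that A holds at all non-root nodes and E holds everywhere, there is a par-variant K' of K (same frame, same valuation except possibly at the root on variables, agreeing on parameters at the root) with K' ⊩ A. -/
/-- A finite rooted intuitionistic Kripke frame. -/
structure Frame where
  W : Type
  fin : Fintype W
  le : W → W → Prop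
  refl : ∀ w, le w w
  trans : ∀ a b c, le a b → le b c → le a c
  root : W
  root_le : ∀ w, le root w

/-- A persistent valuation on a frame. -/
structure Val (var par : Type) (F : Frame) where
  val : F.W → var ⊕ par → Prop
  mono : ∀ {w u : F.W} {a : var ⊕ par}, F.le w u → val w a → val u a

/-- Kripke forcing. -/
def force {var par : Type} (F : Frame) (V : Val var par F) : F.W → Form var par → Prop
  | _, .bot => False
  | w, .v x => V.val w (Sum.inl x)
  | w, .p q => V.val w (Sum.inr q)
  | w, .and A B => force F V w A ∧ force F V w B
  | w, .or A B => force F V w A ∨ force F V w B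
  | w, .imp A B => ∀ u, F.le w u → force F V u A → force F V u B

/-- `V'` is a par-variant of `V`: same valuation off the root, and the same
valuation of parameters at the root (only variables may change at the root). -/
def ParVariant {var par : Type} (F : Frame) (V V' : Val var par F) : Prop :=
  (∀ w : F.W, w ≠ F.root → ∀ a : var ⊕ par, V.val w a ↔ V'.val w a) ∧
  (∀ q : par, V.val F.root (Sum.inr q) ↔ V'.val F.root (Sum.inr q))

namespace ProjAux

variable {var par : Type}

/-- Provability from a set of hypotheses. -/
inductive PrvC (Γ : Set (Form var par)) : Form var par → Prop
  | hyp {A} : A ∈ Γ → PrvC Γ A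
  | ax {A} : Prv false A → PrvC Γ A
  | mp {A B} : PrvC Γ (A.imp B) → PrvC Γ A → PrvC Γ B

theorem imp_refl (A : Form var par) : Prv false (A.imp A) :=
  Prv.mp (Prv.mp Prv.s (Prv.k (B := A.imp A))) Prv.k

theorem PrvC.weaken {Γ Γ' : Set (Form var par)} {B : Form var par} (hs : Γ ⊆ Γ')
    (h : PrvC Γ B) : PrvC Γ' B := by
  induction h with
  | hyp hm => exact .hyp (hs hm)
  | ax h => exact .ax h
  | mp _ _ ih1 ih2 => exact .mp ih1 ih2

theorem ded {Γ : Set (Form var par)} {A B : Form var par} (h : PrvC (insert A Γ) B) :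
    PrvC Γ (A.imp B) := by
  induction h with
  | hyp hm =>
    rcases hm with h | h
    · cases h; exact .ax (imp_refl _)
    · exact .mp (.ax Prv.k) (.hyp h)
  | ax h => exact .mp (.ax Prv.k) (.ax h)
  | mp _ _ ih1 ih2 => exact .mp (.mp (.ax Prv.s) ih1) ih2

theorem toPrv {B : Form var par} (h : PrvC (∅ : Set (Form var par)) B) :
    Prv false B := by
  induction h with
  | hyp hm => exact absurd hm (Set.notMem_empty _)
  | ax h => exact h
  | mp _ _ ih1 ih2 => exact ih1.mp ih2

theorem candI {Γ : Set (Form var par)} {B C : Form var par} (h1 : PrvC Γ B) (h2 : PrvC Γ C) :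
    PrvC Γ (B.and C) := .mp (.mp (.ax Prv.andI) h1) h2

theorem candE1 {Γ : Set (Form var par)} {B C : Form var par} (h : PrvC Γ (B.and C)) :
    PrvC Γ B := .mp (.ax Prv.andE1) h

theorem candE2 {Γ : Set (Form var par)} {B C : Form var par} (h : PrvC Γ (B.and C)) :
    PrvC Γ C := .mp (.ax Prv.andE2) h

theorem impCongrAnd {Γ : Set (Form var par)} {B B' C C' : Form var par}
    (h1 : PrvC Γ (B.imp B')) (h2 : PrvC Γ (C.imp C')) :
    PrvC Γ ((B.and C).imp (B'.and C')) := by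
  apply ded
  have hbc : PrvC (insert (B.and C) Γ) (B.and C) := .hyp (Set.mem_insert _ _)
  exact candI (.mp (h1.weaken (Set.subset_insert _ _)) (candE1 hbc))
    (.mp (h2.weaken (Set.subset_insert _ _)) (candE2 hbc))

theorem impCongrOr {Γ : Set (Form var par)} {B B' C C' : Form var par}
    (h1 : PrvC Γ (B.imp B')) (h2 : PrvC Γ (C.imp C')) :
    PrvC Γ ((B.or C).imp (B'.or C')) := by
  have f : PrvC Γ (B.imp (B'.or C')) := by
    apply ded
    exact .mp (.ax Prv.orI1)
      (.mp (h1.weaken (Set.subset_insert _ _)) (.hyp (Set.mem_insert _ _)))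
  have g : PrvC Γ (C.imp (B'.or C')) := by
    apply ded
    exact .mp (.ax Prv.orI2)
      (.mp (h2.weaken (Set.subset_insert _ _)) (.hyp (Set.mem_insert _ _)))
  exact .mp (.mp (.ax Prv.orE) f) g

theorem impCongrImp {Γ : Set (Form var par)} {B B' C C' : Form var par}
    (h1 : PrvC Γ (B'.imp B)) (h2 : PrvC Γ (C.imp C')) :
    PrvC Γ ((B.imp C).imp (B'.imp C')) := by
  apply ded; apply ded
  have hw : ∀ D : Form var par, PrvC Γ D →
      PrvC (insert B' (insert (B.imp C) Γ)) D := fun _ h =>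
    (h.weaken (Set.subset_insert _ _)).weaken (Set.subset_insert _ _)
  have hb' : PrvC (insert B' (insert (B.imp C) Γ)) B' := .hyp (Set.mem_insert _ _)
  have hbc : PrvC (insert B' (insert (B.imp C) Γ)) (B.imp C) :=
    .hyp (Set.mem_insert_of_mem _ (Set.mem_insert _ _))
  exact .mp (hw _ h2) (.mp hbc (.mp (hw _ h1) hb'))

theorem substIff (A : Form var par) (θ : var → Form var par)
    (hid : ∀ x : var, Prv false (A.imp ((θ x).fiff (Form.v x)))) :
    ∀ B : Form var par,
      PrvC (insert A (∅ : Set (Form var par))) ((Form.subst θ B).fiff B) := by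
  intro B
  induction B with
  | bot => exact candI (.ax (imp_refl _)) (.ax (imp_refl _))
  | v x => exact .mp (.ax (hid x)) (.hyp (Set.mem_insert _ _))
  | p q => exact candI (.ax (imp_refl _)) (.ax (imp_refl _))
  | and B C ih1 ih2 =>
    exact candI (impCongrAnd (candE1 ih1) (candE1 ih2))
      (impCongrAnd (candE2 ih1) (candE2 ih2))
  | or B C ih1 ih2 =>
    exact candI (impCongrOr (candE1 ih1) (candE1 ih2))
      (impCongrOr (candE2 ih1) (candE2 ih2))
  | imp B C ih1 ih2 =>
    exact candI (impCongrImp (candE2 ih1) (candE1 ih2))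
      (impCongrImp (candE1 ih1) (candE2 ih2))

/-- Persistence of forcing. -/
theorem persist {F : Frame} {V : Val var par F} {B : Form var par}
    {w u : F.W} (h : F.le w u) (hf : force F V w B) : force F V u B := by
  induction B generalizing w u with
  | bot => exact hf
  | v x => exact V.mono h hf
  | p q => exact V.mono h hf
  | and B C ih1 ih2 => exact ⟨ih1 h hf.1, ih2 h hf.2⟩
  | or B C ih1 ih2 => exact hf.elim (fun h' => Or.inl (ih1 h h')) (fun h' => Or.inr (ih2 h h'))
  | imp B C ih1 ih2 => exact fun v hv hb => hf v (F.trans _ _ _ h hv) hb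

/-- Soundness of IPC for Kripke forcing. -/
theorem sound {B : Form var par} (h : Prv false B) (F : Frame)
    (V : Val var par F) : ∀ w : F.W, force F V w B := by
  induction h with
  | mp _ _ ih1 ih2 => exact fun w => ih1 w w (F.refl w) (ih2 w)
  | k => exact fun w u _ ha v hv _ => persist hv ha
  | s =>
    exact fun w u _ h1 v hv h2 t ht ha =>
      h1 t (F.trans _ _ _ hv ht) ha t (F.refl t) (h2 t ht ha)
  | andI => exact fun w u _ ha v hv hb => ⟨persist hv ha, hb⟩
  | andE1 => exact fun w u _ h => h.1
  | andE2 => exact fun w u _ h => h.2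
  | orI1 => exact fun w u _ h => Or.inl h
  | orI2 => exact fun w u _ h => Or.inr h
  | orE =>
    exact fun w u _ h1 v hv h2 t ht hor =>
      hor.elim (fun ha => h1 t (F.trans _ _ _ hv ht) ha) (fun hb => h2 t ht hb)
  | exf => exact fun w u _ h => h.elim
  | dne hcl => exact absurd hcl (by simp)

/-- The valuation induced by a substitution. -/
def Vsub (F : Frame) (V : Val var par F) (θ : var → Form var par) :
    Val var par F where
  val w a := match a with
    | .inl x => force F V w (θ x)
    | .inr q => V.val w (Sum.inr q)
  mono := by
    intro w u a h hv
    cases a with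
    | inl x => exact persist h hv
    | inr q => exact V.mono h hv

theorem substForce (F : Frame) (V : Val var par F) (θ : var → Form var par) :
    ∀ (B : Form var par) (w : F.W),
      force F (Vsub F V θ) w B ↔ force F V w (Form.subst θ B) := by
  intro B
  induction B with
  | bot => exact fun w => Iff.rfl
  | v x => exact fun w => Iff.rfl
  | p q => exact fun w => Iff.rfl
  | and B C ih1 ih2 => exact fun w => and_congr (ih1 w) (ih2 w)
  | or B C ih1 ih2 => exact fun w => or_congr (ih1 w) (ih2 w)
  | imp B C ih1 ih2 =>
    exact fun w =>
      forall_congr' fun u => imp_congr_right fun _ => imp_congr (ih1 u) (ih2 u)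

end ProjAux

open ProjAux

/-- Projective `E`-fiers yield `E`-extendability. -/
theorem proj_fier_gives_extendable {var par : Type} (A E : Form var par)
    (θ : var → Form var par) (hE : E.varFree)
    (hid : ∀ x : var, Prv false (A.imp ((θ x).fiff (Form.v x))))
    (hfe : Prv false ((Form.subst θ A).fiff E)) :
    Prv false (A.imp E) ∧
      ∀ (F : Frame) (V : Val var par F),
        (∀ w : F.W, w ≠ F.root → force F V w A) →
        (∀ w : F.W, force F V w E) →
        ∃ V' : Val var par F, ParVariant F V V' ∧ ∀ w : F.W, force F V' w A := by
  have part1 : Prv false (A.imp E) := by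
    have h1 := substIff A θ hid A
    have hA : PrvC (insert A (∅ : Set (Form var par))) A := .hyp (Set.mem_insert _ _)
    have hθA : PrvC (insert A (∅ : Set (Form var par))) (Form.subst θ A) :=
      .mp (candE2 h1) hA
    have hEc : PrvC (insert A (∅ : Set (Form var par))) E :=
      .mp (candE1 (.ax hfe)) hθA
    exact toPrv (ded hEc)
  refine ⟨part1, fun F V hAnr hEall => ?_⟩
  refine ⟨Vsub F V θ, ⟨?_, fun q => Iff.rfl⟩, ?_⟩
  · intro w hw a
    cases a with
    | inr q => exact Iff.rfl
    | inl x =>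
      have hfx := sound (hid x) F V w w (F.refl w) (hAnr w hw)
      exact ⟨fun hv => hfx.2 w (F.refl w) hv, fun hv => hfx.1 w (F.refl w) hv⟩
  · intro w
    rw [substForce]
    exact (sound hfe F V w).2 w (F.refl w) (hEall w)
end

section
/- For finite rooted intuitionistic Kripke models: if K ≤ₙ K' (n-bounded sub-bisimilarity) and A is a formula whose nesting depth of implications is at most n, then K' ⊩ A implies K ⊩ A. -/
/-- A pointed (finite rooted) Kripke model; the point generates the submodel `K↾w`. -/
structure PModel (var par : Type) where
  F : Frame
  V : Val var par F
  w : F.W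

def PModel.at {var par : Type} (M : PModel var par) (u : M.F.W) : PModel var par :=
  ⟨M.F, M.V, u⟩

/-- Bounded bisimilarity `∼ₙ` between (generated submodels of) pointed models. -/
def bisim {var par : Type} : ℕ → PModel var par → PModel var par → Prop
  | 0, M, N => ∀ a : var ⊕ par, M.V.val M.w a ↔ N.V.val N.w a
  | n+1, M, N =>
      (∀ u, M.F.le M.w u → ∃ u', N.F.le N.w u' ∧ bisim n (M.at u) (N.at u')) ∧
      (∀ u', N.F.le N.w u' → ∃ u, M.F.le M.w u ∧ bisim n (M.at u) (N.at u'))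

/-- Bounded sub-bisimilarity `≤ₙ`. -/
def subbisim {var par : Type} : ℕ → PModel var par → PModel var par → Prop
  | 0, M, N => ∀ a : var ⊕ par, N.V.val N.w a → M.V.val M.w a
  | n+1, M, N =>
      ∀ u, M.F.le M.w u → ∃ u', N.F.le N.w u' ∧ bisim n (M.at u) (N.at u')

/-- Maximal nesting depth of implications. -/
def depth {var par : Type} : Form var par → ℕ
  | .bot => 0
  | .v _ => 0
  | .p _ => 0
  | .and A B => max (depth A) (depth B)
  | .or A B => max (depth A) (depth B)
  | .imp A B => max (depth A) (depth B) + 1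

lemma bisim_atom {var par : Type} :
    ∀ (n : ℕ) (M N : PModel var par), bisim n M N →
      ∀ a, M.V.val M.w a ↔ N.V.val N.w a := by
  intro n
  induction n with
  | zero => intro M N h a; exact h a
  | succ m ih =>
    intro M N h a
    constructor
    · intro hv
      obtain ⟨u, hu, hb⟩ := h.2 N.w (N.F.refl N.w)
      exact (ih _ _ hb a).mp (M.V.mono hu hv)
    · intro hv
      obtain ⟨u', hu', hb⟩ := h.1 M.w (M.F.refl M.w)
      exact (ih _ _ hb a).mpr (N.V.mono hu' hv)

lemma bisim_force {var par : Type} :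
    ∀ (A : Form var par) (n : ℕ), depth A ≤ n →
      ∀ (M N : PModel var par), bisim n M N →
        (force M.F M.V M.w A ↔ force N.F N.V N.w A) := by
  intro A
  induction A with
  | bot => intro n _ M N _; exact Iff.rfl
  | v x => intro n _ M N h; exact bisim_atom n M N h (Sum.inl x)
  | p q => intro n _ M N h; exact bisim_atom n M N h (Sum.inr q)
  | and A B ihA ihB =>
    intro n hn M N h
    simp only [depth, max_le_iff] at hn
    exact and_congr (ihA n hn.1 M N h) (ihB n hn.2 M N h)
  | or A B ihA ihB =>
    intro n hn M N h
    simp only [depth, max_le_iff] at hn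
    exact or_congr (ihA n hn.1 M N h) (ihB n hn.2 M N h)
  | imp A B ihA ihB =>
    intro n hn M N h
    obtain ⟨m, rfl⟩ : ∃ m, n = m + 1 := by
      cases n with
      | zero => simp [depth] at hn
      | succ m => exact ⟨m, rfl⟩
    simp only [depth, Nat.add_le_add_iff_right, max_le_iff] at hn
    constructor
    · intro hf u' hu' hfa
      obtain ⟨u, hu, hb⟩ := h.2 u' hu'
      have := hf u hu ((ihA m hn.1 (M.at u) (N.at u') hb).mpr hfa)
      exact (ihB m hn.2 (M.at u) (N.at u') hb).mp this
    · intro hf u hu hfa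
      obtain ⟨u', hu', hb⟩ := h.1 u hu
      have := hf u' hu' ((ihA m hn.1 (M.at u) (N.at u') hb).mp hfa)
      exact (ihB m hn.2 (M.at u) (N.at u') hb).mpr this

lemma subbisim_force {var par : Type} :
    ∀ (A : Form var par) (n : ℕ), depth A ≤ n →
      ∀ (M N : PModel var par), subbisim n M N →
        force N.F N.V N.w A → force M.F M.V M.w A := by
  intro A
  induction A with
  | bot => intro n _ M N _ hf; exact hf
  | v x =>
    intro n hn M N h hf
    cases n with
    | zero => exact h (Sum.inl x) hf
    | succ m =>
      obtain ⟨u', hu', hb⟩ := h M.w (M.F.refl M.w)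
      exact (bisim_atom m (M.at M.w) (N.at u') hb (Sum.inl x)).mpr (N.V.mono hu' hf)
  | p q =>
    intro n hn M N h hf
    cases n with
    | zero => exact h (Sum.inr q) hf
    | succ m =>
      obtain ⟨u', hu', hb⟩ := h M.w (M.F.refl M.w)
      exact (bisim_atom m (M.at M.w) (N.at u') hb (Sum.inr q)).mpr (N.V.mono hu' hf)
  | and A B ihA ihB =>
    intro n hn M N h hf
    simp only [depth, max_le_iff] at hn
    exact ⟨ihA n hn.1 M N h hf.1, ihB n hn.2 M N h hf.2⟩
  | or A B ihA ihB =>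
    intro n hn M N h hf
    simp only [depth, max_le_iff] at hn
    cases hf with
    | inl hf => exact Or.inl (ihA n hn.1 M N h hf)
    | inr hf => exact Or.inr (ihB n hn.2 M N h hf)
  | imp A B ihA ihB =>
    intro n hn M N h hf
    obtain ⟨m, rfl⟩ : ∃ m, n = m + 1 := by
      cases n with
      | zero => simp [depth] at hn
      | succ m => exact ⟨m, rfl⟩
    simp only [depth, Nat.add_le_add_iff_right, max_le_iff] at hn
    intro u hu hfa
    obtain ⟨u', hu', hb⟩ := h u hu
    have := hf u' hu' ((bisim_force A m hn.1 (M.at u) (N.at u') hb).mp hfa)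
    exact (bisim_force B m hn.2 (M.at u) (N.at u') hb).mpr this

/-- If `K ≤ₙ K'` and `A` has implication depth at most `n`, then `K' ⊩ A` implies
`K ⊩ A`. -/
theorem subbisim_preserves_forcing {var par : Type} (n : ℕ)
    (F F' : Frame) (V : Val var par F) (V' : Val var par F')
    (h : subbisim n ⟨F, V, F.root⟩ ⟨F', V', F'.root⟩)
    (A : Form var par) (hA : depth A ≤ n)
    (hf : force F' V' F'.root A) : force F V F.root A :=
  subbisim_force A n hA ⟨F, V, F.root⟩ ⟨F', V', F'.root⟩ h hf
end
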